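/- arXiv:0907.3743 — 4 statements merged into one kernel-verified Lean document; each statement's English description precedes it below -/
import Mathlib

section
/- For all integers d ≥ 2 and s ≥ d, the quantity |𝒯_s^{(d)}| = Σ_{u+v = s−d, u,v ≥ 0} (2v+1) · t_v · ť_{u+d}^{(d)} (which counts plane rooted trees with s edges containing a vertex of exit degree d) satisfies |𝒯_s^{(d)}| ≤ (2s+1) · (3/4)^{d−2} · t_s. -/
open Finset

/-- `t_k = (2k)!/(k!(k+1)!)`, the `k`-th Catalan number, as a real number. -/
noncomputable def tReal (k : ℕ) : ℝ :=
  (Nat.factorial (2 * k) : ℝ) / ((Nat.factorial k : ℝ) * (Nat.factorial (k + 1) : ℝ))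

/-- `ť_s^{(d)} = Σ_{l₁+⋯+l_d = s−d} t_{l₁}⋯t_{l_d}`, the number of plane rooted trees with
`s` edges whose root has exit degree `d`; it is `0` when `d = 0` or `d > s`. -/
noncomputable def tcheck (s d : ℕ) : ℝ :=
  if d = 0 ∨ s < d then 0
  else ∑ l ∈ Finset.Nat.antidiagonalTuple d (s - d), ∏ i, tReal (l i)

/-!
Let `F(n, k)` be the number of sequences of `k` plane trees with `n` edges in total, so that
`ť_{u+d}^{(d)} = F(u, d)`. Splitting off the first tree gives `F(n, k + 1) = Σ_{u+v=n} t_u F(v, k)`,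
so the sum in question is at most `(2s + 1) F(s - d, d + 1)`.

For `k ≥ 2`, trading a tree for an edge loses at least a factor `3/4`:
`F(n, k + 1) ≤ (3/4) F(n + 1, k)`. For `k = 2` this is `t_{n+2} - t_{n+1} ≤ (3/4) t_{n+2}`, i.e.
`t_{n+2} ≤ 4 t_{n+1}`, and the splitting recursion carries it from `k` to `k + 1`. Iterating down
to two trees, `F(s - d, d + 1) ≤ (3/4)^{d-1} F(s - 1, 2) = (3/4)^{d-1} t_s`.
-/

theorem Finset.Nat.sum_antidiagonalTuple_succ {M : Type*} [AddCommMonoid M] (k n : ℕ)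
    (f : (Fin (k + 1) → ℕ) → M) :
    ∑ l ∈ antidiagonalTuple (k + 1) n, f l =
      ∑ p ∈ antidiagonal n, ∑ l ∈ antidiagonalTuple k p.2, f (Fin.cons p.1 l) := by
  simp only [antidiagonalTuple, Multiset.Nat.antidiagonalTuple, List.Nat.antidiagonalTuple,
    sum_mk, Multiset.map_coe, Multiset.sum_coe, List.flatMap_def, List.map_flatten,
    List.sum_flatten, List.map_map, Function.comp_def]
  rfl

section Catalan

lemma tReal_eq_catalan (k : ℕ) : tReal k = catalan k := by
  have hfact : (2 * k).choose k * k.factorial * k.factorial = (2 * k).factorial := by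
    simpa [show 2 * k - k = k by omega] using
      Nat.choose_mul_factorial_mul_factorial (by omega : k ≤ 2 * k)
  rw [tReal, Nat.factorial_succ, ← hfact, ← Nat.centralBinom_eq_two_mul_choose,
    ← succ_mul_catalan_eq_centralBinom]
  push_cast
  field_simp

lemma tReal_nonneg (k : ℕ) : 0 ≤ tReal k := by
  rw [tReal]
  positivity

lemma tReal_zero : tReal 0 = 1 := by
  simp [tReal]

lemma tReal_succ_mul (k : ℕ) : (k + 2) * tReal (k + 1) = 2 * (2 * k + 1) * tReal k := by
  simp only [tReal, show 2 * (k + 1) = 2 * k + 1 + 1 by ring, Nat.factorial_succ]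
  push_cast
  field_simp
  ring

lemma tReal_succ_le (k : ℕ) : tReal (k + 1) ≤ 4 * tReal k := by
  nlinarith [tReal_succ_mul k, tReal_nonneg k, tReal_nonneg (k + 1)]

lemma sum_antidiagonal_tReal_mul_tReal (n : ℕ) :
    ∑ p ∈ antidiagonal n, tReal p.1 * tReal p.2 = tReal (n + 1) := by
  simp only [tReal_eq_catalan, catalan_succ']
  push_cast
  rfl

end Catalan

section Forests

noncomputable def forestCount (n k : ℕ) : ℝ :=
  ∑ l ∈ Finset.Nat.antidiagonalTuple k n, ∏ i, tReal (l i)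

lemma forestCount_nonneg (n k : ℕ) : 0 ≤ forestCount n k :=
  sum_nonneg fun _ _ => prod_nonneg fun _ _ => tReal_nonneg _

lemma tcheck_add {d : ℕ} (hd : d ≠ 0) (n : ℕ) : tcheck (n + d) d = forestCount n d := by
  rw [tcheck, if_neg (by omega), Nat.add_sub_cancel, forestCount]

lemma forestCount_succ (n k : ℕ) :
    forestCount n (k + 1) = ∑ p ∈ antidiagonal n, tReal p.1 * forestCount p.2 k := by
  simp only [forestCount, Finset.Nat.sum_antidiagonalTuple_succ, Fin.prod_univ_succ,
    Fin.cons_zero, Fin.cons_succ, mul_sum]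

lemma forestCount_one (n : ℕ) : forestCount n 1 = tReal n := by
  simp [forestCount]

lemma forestCount_two (n : ℕ) : forestCount n 2 = tReal (n + 1) := by
  rw [forestCount_succ n 1]
  simp only [forestCount_one, sum_antidiagonal_tReal_mul_tReal]

lemma forestCount_three (n : ℕ) : forestCount n 3 = tReal (n + 2) - tReal (n + 1) := by
  have hsplit := Finset.Nat.sum_antidiagonal_succ' (n := n) (f := fun p => tReal p.1 * tReal p.2)
  rw [sum_antidiagonal_tReal_mul_tReal, tReal_zero] at hsplit
  simp only [forestCount_succ (k := 2), forestCount_two]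
  linarith

lemma forestCount_succ_le {k : ℕ} (hk : 2 ≤ k) (n : ℕ) :
    forestCount n (k + 1) ≤ 3 / 4 * forestCount (n + 1) k := by
  induction k, hk using Nat.le_induction generalizing n with
  | base =>
    rw [forestCount_three, forestCount_two]
    linarith [tReal_succ_le (n + 1)]
  | succ k _ ih =>
    -- the term of `F(n + 1, k + 1)` whose first tree has all `n + 1` edges is dropped
    have hsplit : forestCount (n + 1) (k + 1) = tReal (n + 1) * forestCount 0 k +
        ∑ p ∈ antidiagonal n, tReal p.1 * forestCount (p.2 + 1) k := by
      rw [forestCount_succ, Finset.Nat.sum_antidiagonal_succ']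
    have hdrop : 0 ≤ tReal (n + 1) * forestCount 0 k :=
      mul_nonneg (tReal_nonneg _) (forestCount_nonneg _ _)
    calc forestCount n (k + 1 + 1)
        = ∑ p ∈ antidiagonal n, tReal p.1 * forestCount p.2 (k + 1) := forestCount_succ n (k + 1)
      _ ≤ ∑ p ∈ antidiagonal n, tReal p.1 * (3 / 4 * forestCount (p.2 + 1) k) :=
          sum_le_sum fun p _ => mul_le_mul_of_nonneg_left (ih p.2) (tReal_nonneg _)
      _ = 3 / 4 * ∑ p ∈ antidiagonal n, tReal p.1 * forestCount (p.2 + 1) k := by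
          rw [mul_sum]
          exact sum_congr rfl fun _ _ => by ring
      _ ≤ 3 / 4 * forestCount (n + 1) (k + 1) := by linarith

lemma forestCount_add_two_le (k n : ℕ) :
    forestCount n (k + 2) ≤ (3 / 4) ^ k * tReal (n + k + 1) := by
  induction k generalizing n with
  | zero => simp [forestCount_two]
  | succ k ih =>
    calc forestCount n (k + 1 + 2)
        ≤ 3 / 4 * forestCount (n + 1) (k + 2) := forestCount_succ_le (by omega) n
      _ ≤ 3 / 4 * ((3 / 4) ^ k * tReal (n + 1 + k + 1)) := by gcongr; exact ih (n + 1)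
      _ = (3 / 4) ^ (k + 1) * tReal (n + (k + 1) + 1) := by
          rw [show n + 1 + k = n + (k + 1) by omega]
          ring

end Forests

/-- For `2 ≤ d ≤ s`,
`|𝒯_s^{(d)}| = Σ_{u+v=s−d} (2v+1)·t_v·ť_{u+d}^{(d)} ≤ (2s+1)·(3/4)^{d−2}·t_s`. -/
theorem trees_with_large_degree_bound (d s : ℕ) (hd : 2 ≤ d) (hds : d ≤ s) :
    ∑ p ∈ Finset.HasAntidiagonal.antidiagonal (s - d),
        (2 * (p.2 : ℝ) + 1) * tReal p.2 * tcheck (p.1 + d) d ≤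
      (2 * (s : ℝ) + 1) * (3 / 4 : ℝ) ^ (d - 2) * tReal s := by
  have hterm : ∀ p ∈ antidiagonal (s - d), (2 * (p.2 : ℝ) + 1) * tReal p.2 * tcheck (p.1 + d) d ≤
      (2 * s + 1) * (tReal p.2 * forestCount p.1 d) := by
    intro p hp
    have hp2 : (p.2 : ℝ) ≤ s := by
      have := mem_antidiagonal.mp hp
      exact_mod_cast (by omega : p.2 ≤ s)
    rw [tcheck_add (by omega), mul_assoc]
    gcongr
    exact mul_nonneg (tReal_nonneg _) (forestCount_nonneg _ _)
  have hdecay : forestCount (s - d) (d + 1) ≤ (3 / 4) ^ (d - 2) * tReal s := by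
    have h := forestCount_add_two_le (d - 1) (s - d)
    rw [show d - 1 + 2 = d + 1 by omega, show s - d + (d - 1) + 1 = s by omega] at h
    refine h.trans (mul_le_mul_of_nonneg_right ?_ (tReal_nonneg s))
    exact pow_le_pow_of_le_one (by norm_num) (by norm_num) (by omega)
  calc _ ≤ ∑ p ∈ antidiagonal (s - d), (2 * (s : ℝ) + 1) * (tReal p.2 * forestCount p.1 d) :=
        sum_le_sum hterm
    _ = (2 * s + 1) * forestCount (s - d) (d + 1) := by
        rw [← mul_sum, forestCount_succ, ← Finset.Nat.sum_antidiagonal_swap]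
        rfl
    _ ≤ (2 * s + 1) * ((3 / 4) ^ (d - 2) * tReal s) := by gcongr
    _ = _ := by ring
end

section
/- Let w be a closed even walk of length 2s on a set V with no loops, and let β ∈ V with β ≠ w(0). Then: (i) the number of marked steps t with w(t) = β equals the number of non-marked steps t with w(t−1) = β, and (ii) the number of non-marked steps t with w(t) = β equals the number of marked steps t with w(t−1) = β. -/
open scoped Classical

/-- The unordered edge traversed by step `t` of the walk `w`, i.e. `{w(t−1), w(t)}`. -/
def edgeAt {V : Type*} (w : ℕ → V) (t : ℕ) : Sym2 V := s(w (t - 1), w t)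

/-- Step `t` of the walk `w` is *marked* if the number of steps `t' ∈ {1, …, t}` traversing
the same unordered edge as step `t` is odd. -/
def IsMarked {V : Type*} (w : ℕ → V) (t : ℕ) : Prop :=
  Odd ((Finset.Icc 1 t).filter (fun t' => edgeAt w t' = edgeAt w t)).card

/-!
The traversals of a fixed edge alternate marked, non-marked, marked, …, so an edge traversed an
even number of times is traversed equally often by marked and by non-marked steps. Weighting each
step by the number of its endpoints equal to `β` shows that the marked steps enter or leave `β`
as often as the non-marked ones; and since the walk is closed, `β` is entered as often as it is
left. These two linear relations between the four counts of the theorem give (i) and (ii).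
-/

open Finset

lemma sum_filter_comp_eq_sum_image {ι α M : Type*} [AddCommMonoid M] [DecidableEq α]
    (s : Finset ι) (e : ι → α) (p : ι → Prop) [DecidablePred p] (g : α → M) :
    ∑ t ∈ s with p t, g (e t) = ∑ a ∈ s.image e, #{t ∈ s | e t = a ∧ p t} • g a := by
  rw [← sum_fiberwise_of_maps_to (t := s.image e) fun t ht => mem_image_of_mem e (mem_filter.1 ht).1]
  refine sum_congr rfl fun a _ => ?_
  rw [sum_congr rfl fun t ht => congrArg g (mem_filter.1 ht).2, sum_const, filter_filter]
  simp only [and_comm]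

lemma card_filter_and_add_card_filter_not_and {ι : Type*} (s : Finset ι) (p q : ι → Prop)
    [DecidablePred p] [DecidablePred q] :
    #{t ∈ s | p t ∧ q t} + #{t ∈ s | ¬p t ∧ q t} = #{t ∈ s | q t} := by
  rw [← card_filter_add_card_filter_not (s := {t ∈ s | q t}) p, filter_filter, filter_filter]
  simp only [and_comm]

lemma sum_range_add_one_eq_sum_Icc {M : Type*} [AddCommMonoid M] (f : ℕ → M) (n : ℕ) :
    ∑ t ∈ range n, f (t + 1) = ∑ t ∈ Icc 1 n, f t := by
  rw [range_eq_Ico, sum_Ico_add', zero_add, Ico_add_one_right_eq_Icc]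

lemma sum_Icc_sub_one_eq_of_apply_zero_eq {M : Type*} [AddCancelCommMonoid M] (f : ℕ → M) {n : ℕ}
    (h : f 0 = f n) : ∑ t ∈ Icc 1 n, f (t - 1) = ∑ t ∈ Icc 1 n, f t := by
  refine add_right_cancel (b := f 0) ?_
  calc ∑ t ∈ Icc 1 n, f (t - 1) + f 0
      = ∑ t ∈ range n, f t + f n := by
        rw [← sum_range_add_one_eq_sum_Icc, h]
        simp only [Nat.add_sub_cancel]
    _ = ∑ t ∈ range n, f (t + 1) + f 0 := by rw [← sum_range_succ, sum_range_succ']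
    _ = ∑ t ∈ Icc 1 n, f t + f 0 := by rw [sum_range_add_one_eq_sum_Icc]

lemma card_filter_Icc_add_one (p : ℕ → Prop) [DecidablePred p] (n : ℕ) :
    #{t ∈ Icc 1 (n + 1) | p t} = #{t ∈ Icc 1 n | p t} + if p (n + 1) then 1 else 0 := by
  rw [← insert_Icc_right_eq_Icc_add_one (by omega), filter_insert]
  split_ifs
  · exact card_insert_of_notMem (by simp)
  · rfl

lemma card_filter_and_odd_card (p : ℕ → Prop) [DecidablePred p] (n : ℕ) :
    #{t ∈ Icc 1 n | p t ∧ Odd #{t' ∈ Icc 1 t | p t'}} = (#{t ∈ Icc 1 n | p t} + 1) / 2 := by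
  induction n with
  | zero => simp
  | succ n ih =>
    rw [card_filter_Icc_add_one, ih, card_filter_Icc_add_one]
    by_cases hp : p (n + 1)
    · simp only [hp, true_and, if_true, Nat.odd_iff]
      split_ifs <;> omega
    · simp [hp]

lemma card_filter_and_odd_card_eq_of_even (p : ℕ → Prop) [DecidablePred p] {n : ℕ}
    (heven : Even #{t ∈ Icc 1 n | p t}) :
    #{t ∈ Icc 1 n | p t ∧ Odd #{t' ∈ Icc 1 t | p t'}} =
      #{t ∈ Icc 1 n | p t ∧ ¬Odd #{t' ∈ Icc 1 t | p t'}} := by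
  have hsplit := card_filter_add_card_filter_not (s := {t ∈ Icc 1 n | p t})
    (fun t => Odd #{t' ∈ Icc 1 t | p t'})
  simp only [filter_filter] at hsplit
  have hodd := card_filter_and_odd_card p n
  rw [Nat.even_iff] at heven
  omega

/-- `IsMarked w` is `IsOddOccurrence (edgeAt w)` by definition. -/
def IsOddOccurrence {α : Type*} [DecidableEq α] (e : ℕ → α) (t : ℕ) : Prop :=
  Odd #{t' ∈ Icc 1 t | e t' = e t}

lemma sum_filter_isOddOccurrence_eq {α M : Type*} [AddCommMonoid M] [DecidableEq α]
    (e : ℕ → α) {n : ℕ} (heven : ∀ a, Even #{t ∈ Icc 1 n | e t = a}) (g : α → M) :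
    ∑ t ∈ Icc 1 n with IsOddOccurrence e t, g (e t) =
      ∑ t ∈ Icc 1 n with ¬IsOddOccurrence e t, g (e t) := by
  rw [sum_filter_comp_eq_sum_image, sum_filter_comp_eq_sum_image]
  refine sum_congr rfl fun a _ => ?_
  have hfiber : ∀ t, e t = a → (IsOddOccurrence e t ↔ Odd #{t' ∈ Icc 1 t | e t' = a}) :=
    fun t ht => by rw [IsOddOccurrence, ht]
  rw [filter_congr fun t _ => and_congr_right (hfiber t),
    filter_congr fun t _ => and_congr_right fun ht => not_congr (hfiber t ht),
    card_filter_and_odd_card_eq_of_even _ (heven a)]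

lemma card_exits_eq_card_arrivals {V : Type*} (w : ℕ → V) {n : ℕ} (hclosed : w 0 = w n)
    (β : V) : #{t ∈ Icc 1 n | w (t - 1) = β} = #{t ∈ Icc 1 n | w t = β} := by
  rw [card_filter, card_filter]
  exact sum_Icc_sub_one_eq_of_apply_zero_eq (fun t => if w t = β then 1 else 0)
    (by rw [hclosed])

lemma card_isMarked_visits_eq_card_not_isMarked_visits {V : Type*} (w : ℕ → V) {n : ℕ}
    (heven : ∀ e, Even #{t ∈ Icc 1 n | edgeAt w t = e}) (β : V) :
    #{t ∈ Icc 1 n | IsMarked w t ∧ w (t - 1) = β} + #{t ∈ Icc 1 n | IsMarked w t ∧ w t = β} =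
      #{t ∈ Icc 1 n | ¬IsMarked w t ∧ w (t - 1) = β} +
        #{t ∈ Icc 1 n | ¬IsMarked w t ∧ w t = β} := by
  -- an edge is weighted by its number of endpoints equal to `β`, a loop at `β` counting twice
  have h : ∑ t ∈ Icc 1 n with IsMarked w t,
        ((if w (t - 1) = β then 1 else 0) + (if w t = β then 1 else 0)) =
      ∑ t ∈ Icc 1 n with ¬IsMarked w t,
        ((if w (t - 1) = β then 1 else 0) + (if w t = β then 1 else 0)) :=
    sum_filter_isOddOccurrence_eq (edgeAt w) heven
      (Sym2.lift ⟨fun u v => (if u = β then 1 else 0) + (if v = β then 1 else 0),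
        fun _ _ => add_comm _ _⟩)
  simpa only [sum_add_distrib, sum_boole, filter_filter, Nat.cast_id] using h

theorem marked_arrivals_eq_nonmarked_exits_general {V : Type*} (s : ℕ) (w : ℕ → V)
    (hclosed : w 0 = w (2 * s))
    (heven : ∀ e : Sym2 V,
      Even ((Finset.Icc 1 (2 * s)).filter (fun t => edgeAt w t = e)).card)
    (β : V) :
    ((Finset.Icc 1 (2 * s)).filter (fun t => IsMarked w t ∧ w t = β)).card =
        ((Finset.Icc 1 (2 * s)).filter (fun t => ¬ IsMarked w t ∧ w (t - 1) = β)).card ∧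
      ((Finset.Icc 1 (2 * s)).filter (fun t => ¬ IsMarked w t ∧ w t = β)).card =
        ((Finset.Icc 1 (2 * s)).filter (fun t => IsMarked w t ∧ w (t - 1) = β)).card := by
  have hbalance := card_isMarked_visits_eq_card_not_isMarked_visits w heven β
  have hvisits := card_exits_eq_card_arrivals w hclosed β
  have harrivals := card_filter_and_add_card_filter_not_and (Icc 1 (2 * s)) (IsMarked w)
    (fun t => w t = β)
  have hexits := card_filter_and_add_card_filter_not_and (Icc 1 (2 * s)) (IsMarked w)
    (fun t => w (t - 1) = β)
  omega

/-- For a closed even walk of length `2s` with no loops and a vertex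
`β ≠ w(0)`: (i) the number of marked steps `t` with `w(t) = β` equals the number of
non-marked steps `t` with `w(t−1) = β`; (ii) the number of non-marked steps `t` with
`w(t) = β` equals the number of marked steps `t` with `w(t−1) = β`. -/
theorem marked_arrivals_eq_nonmarked_exits {V : Type*} (s : ℕ) (hs : 1 ≤ s) (w : ℕ → V)
    (hclosed : w 0 = w (2 * s))
    (hnoloop : ∀ t ∈ Finset.Icc 1 (2 * s), w (t - 1) ≠ w t)
    (heven : ∀ e : Sym2 V,
      Even ((Finset.Icc 1 (2 * s)).filter (fun t => edgeAt w t = e)).card)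
    (β : V) (hβ : β ≠ w 0) :
    ((Finset.Icc 1 (2 * s)).filter (fun t => IsMarked w t ∧ w t = β)).card =
        ((Finset.Icc 1 (2 * s)).filter (fun t => ¬ IsMarked w t ∧ w (t - 1) = β)).card ∧
      ((Finset.Icc 1 (2 * s)).filter (fun t => ¬ IsMarked w t ∧ w t = β)).card =
        ((Finset.Icc 1 (2 * s)).filter (fun t => IsMarked w t ∧ w (t - 1) = β)).card :=
  marked_arrivals_eq_nonmarked_exits_general s w hclosed heven β
end

section
/- Let w be a closed even walk of length 2s on a set V with no loops, let β ∈ V with β ≠ w(0), and let t ∈ {0, 1, …, 2s} be an instant with w(t) ≠ β. Then the number of unordered edges {β, γ} that are traversed an odd number of times by the steps 1, …, t (the t-open edges attached to β) is at most twice the number of marked steps t' ∈ {1, …, t} with w(t') = β. -/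
open scoped Classical

/-!
Summing over the edges `e` at `β` the identity `2 · #(marked traversals of e) = #(traversals
of e) + (#(traversals of e) mod 2)`, which holds because the marked traversals of an edge are
its 1st, 3rd, 5th, … ones, gives `2 M = T + #(open edges at β)`, where `M` and `T` count the
marked and all steps at `β` up to time `t`. Without loops, every step at `β` is either an
arrival at or a departure from `β`; as the walk is away from `β` at times `0` and `t`, there
are as many departures as arrivals. Hence `#(open edges) = 2 · #(marked arrivals) +
2 · #(marked departures) − 2 · #(departures) ≤ 2 · #(marked arrivals)`.
-/

open Finset

noncomputable section

variable {V : Type*} (w : ℕ → V)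

lemma card_filter_Icc_succ (p : ℕ → Prop) [DecidablePred p] (t : ℕ) :
    #{i ∈ Icc 1 (t + 1) | p i} = #{i ∈ Icc 1 t | p i} + if p (t + 1) then 1 else 0 := by
  simp only [card_filter, sum_Icc_succ_top (Nat.le_add_left 1 t)]

lemma card_filter_Icc_sub_one_add_ite (p : ℕ → Prop) [DecidablePred p] (t : ℕ) :
    #{i ∈ Icc 1 t | p (i - 1)} + (if p t then 1 else 0) =
      #{i ∈ Icc 1 t | p i} + if p 0 then 1 else 0 := by
  induction t with
  | zero => simp
  | succ t ih =>
    rw [card_filter_Icc_succ (fun i => p (i - 1)), card_filter_Icc_succ p, Nat.add_sub_cancel]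
    omega

def edgeCount (e : Sym2 V) (t : ℕ) : ℕ := #{i ∈ Icc 1 t | edgeAt w i = e}

def markedEdgeCount (e : Sym2 V) (t : ℕ) : ℕ := #{i ∈ Icc 1 t | IsMarked w i ∧ edgeAt w i = e}

lemma two_mul_markedEdgeCount (e : Sym2 V) (t : ℕ) :
    2 * markedEdgeCount w e t = edgeCount w e t + edgeCount w e t % 2 := by
  induction t with
  | zero => simp [markedEdgeCount, edgeCount]
  | succ t ih =>
    unfold markedEdgeCount edgeCount at *
    rw [card_filter_Icc_succ (fun i => IsMarked w i ∧ edgeAt w i = e),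
      card_filter_Icc_succ (fun i => edgeAt w i = e)]
    by_cases he : edgeAt w (t + 1) = e
    · have hmarked : IsMarked w (t + 1) ↔ Odd #{i ∈ Icc 1 (t + 1) | edgeAt w i = e} := by
        rw [IsMarked, he]
      rw [card_filter_Icc_succ (fun i => edgeAt w i = e), if_pos he, Nat.odd_iff] at hmarked
      simp only [he, and_true, if_true, hmarked]
      split_ifs <;> omega
    · simp only [he, and_false, if_false]
      omega

def edgesAt (β : V) (t : ℕ) : Finset (Sym2 V) := {e ∈ (Icc 1 t).image (edgeAt w) | β ∈ e}

def openEdgesAt (β : V) (t : ℕ) : Finset (Sym2 V) :=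
  {e ∈ edgesAt w β t | Odd (edgeCount w e t)}

lemma filter_image_edgeAt_eq_openEdgesAt (β : V) {t n : ℕ} (ht : t ≤ n) :
    {e ∈ (Icc 1 n).image (edgeAt w) | β ∈ e ∧ Odd (edgeCount w e t)} = openEdgesAt w β t := by
  ext e
  simp only [openEdgesAt, edgesAt, mem_filter, mem_image, mem_Icc]
  constructor
  · rintro ⟨-, hβ, hodd⟩
    obtain ⟨i, hi⟩ := card_pos.1 hodd.pos
    rw [mem_filter, mem_Icc] at hi
    exact ⟨⟨⟨i, hi.1, hi.2⟩, hβ⟩, hodd⟩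
  · rintro ⟨⟨⟨i, hi, rfl⟩, hβ⟩, hodd⟩
    exact ⟨⟨i, ⟨hi.1, hi.2.trans ht⟩, rfl⟩, hβ, hodd⟩

lemma card_filter_mem_edgeAt_eq_sum (Q : ℕ → Prop) [DecidablePred Q] (β : V) (t : ℕ) :
    #{i ∈ Icc 1 t | Q i ∧ β ∈ edgeAt w i} =
      ∑ e ∈ edgesAt w β t, #{i ∈ Icc 1 t | Q i ∧ edgeAt w i = e} := by
  rw [card_eq_sum_card_fiberwise (f := edgeAt w) (t := edgesAt w β t)]
  · refine sum_congr rfl fun e he => ?_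
    rw [edgesAt, mem_filter] at he
    rw [filter_filter]
    refine congrArg card (filter_congr fun i _ => ?_)
    constructor
    · rintro ⟨⟨hQ, -⟩, rfl⟩
      exact ⟨hQ, rfl⟩
    · rintro ⟨hQ, rfl⟩
      exact ⟨⟨hQ, he.2⟩, rfl⟩
  · intro i hi
    rw [mem_coe, mem_filter] at hi
    exact mem_coe.2 (mem_filter.2 ⟨mem_image_of_mem _ hi.1, hi.2.2⟩)

lemma two_mul_card_marked_mem_edgeAt (β : V) (t : ℕ) :
    2 * #{i ∈ Icc 1 t | IsMarked w i ∧ β ∈ edgeAt w i} =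
      #{i ∈ Icc 1 t | β ∈ edgeAt w i} + #(openEdgesAt w β t) := by
  have hall := card_filter_mem_edgeAt_eq_sum w (fun _ => True) β t
  simp only [true_and] at hall
  have hopen : #(openEdgesAt w β t) = ∑ e ∈ edgesAt w β t, edgeCount w e t % 2 := by
    rw [openEdgesAt, card_filter]
    refine sum_congr rfl fun e _ => ?_
    split_ifs with h
    · exact (Nat.odd_iff.1 h).symm
    · exact (Nat.not_odd_iff.1 h).symm
  rw [card_filter_mem_edgeAt_eq_sum, hall, hopen, mul_sum, ← sum_add_distrib]
  exact sum_congr rfl fun e _ => two_mul_markedEdgeCount w e t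

lemma mem_edgeAt_iff {β : V} {i : ℕ} : β ∈ edgeAt w i ↔ w (i - 1) = β ∨ w i = β := by
  rw [edgeAt, Sym2.mem_iff, eq_comm, @eq_comm _ β]

lemma card_filter_mem_edgeAt (β : V) (s : Finset ℕ) (hloop : ∀ i ∈ s, w (i - 1) ≠ w i) :
    #{i ∈ s | β ∈ edgeAt w i} = #{i ∈ s | w (i - 1) = β} + #{i ∈ s | w i = β} := by
  rw [← card_union_of_disjoint, ← filter_or]
  · exact congrArg card (filter_congr fun i _ => mem_edgeAt_iff w)
  · exact disjoint_filter.2 fun i hi h₁ h₂ => hloop i hi (h₁.trans h₂.symm)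

end

theorem open_edges_le_two_mul_marked_arrivals_general {V : Type*} (s : ℕ) (w : ℕ → V)
    (hnoloop : ∀ t ∈ Finset.Icc 1 (2 * s), w (t - 1) ≠ w t)
    (β : V) (hβ : β ≠ w 0) (t : ℕ) (ht : t ≤ 2 * s) (hwt : w t ≠ β) :
    (((Finset.Icc 1 (2 * s)).image (edgeAt w)).filter
        (fun e => β ∈ e ∧
          Odd ((Finset.Icc 1 t).filter (fun t' => edgeAt w t' = e)).card)).card ≤
      2 * ((Finset.Icc 1 t).filter (fun t' => IsMarked w t' ∧ w t' = β)).card := by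
  have hloop : ∀ i ∈ Icc 1 t, w (i - 1) ≠ w i := fun i hi =>
    hnoloop i (Icc_subset_Icc_right ht hi)
  have hmarked := two_mul_card_marked_mem_edgeAt w β t
  rw [← filter_filter, card_filter_mem_edgeAt w β _ fun i hi => hloop i (filter_subset _ _ hi),
    filter_filter, filter_filter, card_filter_mem_edgeAt w β _ hloop] at hmarked
  have hdepartures := card_filter_Icc_sub_one_add_ite (fun i => w i = β) t
  simp only [hwt, hβ.symm, if_false] at hdepartures
  have hmarked_departures : #{i ∈ Icc 1 t | IsMarked w i ∧ w (i - 1) = β} ≤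
      #{i ∈ Icc 1 t | w (i - 1) = β} :=
    card_le_card (monotone_filter_right _ fun _ _ h => h.2)
  calc _ = #(openEdgesAt w β t) := congrArg card (filter_image_edgeAt_eq_openEdgesAt w β ht)
    _ ≤ _ := by omega

/-- For a closed even walk of length `2s` with no loops, a vertex
`β ≠ w(0)`, and an instant `t ≤ 2s` with `w(t) ≠ β`, the number of unordered edges
attached to `β` that are traversed an odd number of times during the steps `1, …, t`
(the `t`-open edges at `β`) is at most twice the number of marked steps `t' ≤ t`
with `w(t') = β`. -/
theorem open_edges_le_two_mul_marked_arrivals {V : Type*} (s : ℕ) (hs : 1 ≤ s) (w : ℕ → V)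
    (hclosed : w 0 = w (2 * s))
    (hnoloop : ∀ t ∈ Finset.Icc 1 (2 * s), w (t - 1) ≠ w t)
    (heven : ∀ e : Sym2 V,
      Even ((Finset.Icc 1 (2 * s)).filter (fun t' => edgeAt w t' = e)).card)
    (β : V) (hβ : β ≠ w 0) (t : ℕ) (ht : t ≤ 2 * s) (hwt : w t ≠ β) :
    (((Finset.Icc 1 (2 * s)).image (edgeAt w)).filter
        (fun e => β ∈ e ∧
          Odd ((Finset.Icc 1 t).filter (fun t' => edgeAt w t' = e)).card)).card ≤
      2 * ((Finset.Icc 1 t).filter (fun t' => IsMarked w t' ∧ w t' = β)).card :=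
  open_edges_le_two_mul_marked_arrivals_general s w hnoloop β hβ t ht hwt
end

section
/- Let η ≥ 1 be a real number and 0 < δ₀ < 1, and suppose that the jointly independent identically distributed random variables {a_{ij} : 1 ≤ i ≤ j} satisfy E[|a_{ij}|^{2(η+δ₀)}] < ∞. Then for every δ with 0 < δ ≤ δ₀/(η(η+1)), almost surely there exists N such that for all n ≥ N and all 1 ≤ i ≤ j ≤ n one has |a_{ij}| ≤ n^{1/η − δ}; equivalently, the event that |a_{ij}| > n^{1/η−δ} for some 1 ≤ i ≤ j ≤ n occurs only for finitely many n, with probability one. -/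
/-!
By the first Borel–Cantelli lemma it suffices that `∑_{1 ≤ i ≤ j} P(|a_{ij}| > j^α) < ∞`, where
`α = 1/η - δ` (then `j ≤ n` gives `j^α ≤ n^α`). Markov's inequality for the `p`-th moment,
`p = 2(η + δ₀)`, bounds the `(i, j)` term by `E|a_{00}|^p · j^{-αp}`, and the hypothesis on `δ`
is what makes `αp > 2`, so that `∑_{1 ≤ i ≤ j} j^{-αp} ≤ (∑_i i^{-αp/2})^2 < ∞`.
-/

open MeasureTheory ProbabilityTheory Filter Real

section

variable {Ω : Type*} [MeasurableSpace Ω] {μ : Measure Ω} [IsFiniteMeasure μ]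

lemma measure_lt_abs_le_integral_rpow_div {X : Ω → ℝ} {p t : ℝ} (hp : 0 ≤ p) (ht : 0 < t)
    (hX : Integrable (fun ω ↦ |X ω| ^ p) μ) :
    μ {ω | t < |X ω|} ≤ ENNReal.ofReal ((∫ ω, |X ω| ^ p ∂μ) / t ^ p) := by
  have htp : 0 < t ^ p := rpow_pos_of_pos ht p
  have hsub : {ω | t < |X ω|} ⊆ {ω | t ^ p ≤ |X ω| ^ p} := fun ω hω ↦
    rpow_le_rpow ht.le (le_of_lt hω) hp
  have hmarkov := mul_meas_ge_le_integral_of_nonneg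
    (ae_of_all _ fun ω ↦ rpow_nonneg (abs_nonneg (X ω)) p) hX (t ^ p)
  calc μ {ω | t < |X ω|} ≤ μ {ω | t ^ p ≤ |X ω| ^ p} := measure_mono hsub
    _ = ENNReal.ofReal (μ.real {ω | t ^ p ≤ |X ω| ^ p}) :=
      (ofReal_measureReal (measure_ne_top _ _)).symm
    _ ≤ ENNReal.ofReal ((∫ ω, |X ω| ^ p ∂μ) / t ^ p) :=
      ENNReal.ofReal_le_ofReal ((le_div_iff₀' htp).mpr hmarkov)

lemma summable_triangle_rpow_neg {r : ℝ} (hr : 2 < r) :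
    Summable fun s : ℕ × ℕ ↦ if 1 ≤ s.1 ∧ s.1 ≤ s.2 then (s.2 : ℝ) ^ (-r) else 0 := by
  have hsum : Summable fun n : ℕ ↦ (n : ℝ) ^ (-(r / 2)) :=
    summable_nat_rpow.mpr (by linarith)
  refine Summable.of_nonneg_of_le (fun s ↦ ?_) (fun s ↦ ?_)
    (hsum.mul_of_nonneg hsum (fun n ↦ rpow_nonneg n.cast_nonneg _)
      (fun n ↦ rpow_nonneg n.cast_nonneg _))
  · split_ifs
    exacts [rpow_nonneg s.2.cast_nonneg _, le_rfl]
  · split_ifs with hs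
    · obtain ⟨hi, hij⟩ := hs
      have hi0 : (0 : ℝ) < s.1 := by exact_mod_cast hi
      have hj0 : (0 : ℝ) < s.2 := by exact_mod_cast hi.trans hij
      calc (s.2 : ℝ) ^ (-r) = (s.2 : ℝ) ^ (-(r / 2)) * (s.2 : ℝ) ^ (-(r / 2)) := by
            rw [← rpow_add hj0]; ring_nf
        _ ≤ (s.1 : ℝ) ^ (-(r / 2)) * (s.2 : ℝ) ^ (-(r / 2)) := by
            refine mul_le_mul_of_nonneg_right ?_ (rpow_nonneg hj0.le _)
            exact rpow_le_rpow_of_nonpos hi0 (by exact_mod_cast hij) (by linarith)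
    · exact mul_nonneg (rpow_nonneg s.1.cast_nonneg _) (rpow_nonneg s.2.cast_nonneg _)

lemma exists_forall_abs_le_rpow_of_finite {x : ℕ → ℕ → ℝ} {α : ℝ} (hα : 0 < α)
    (hfin : {s : ℕ × ℕ | 1 ≤ s.1 ∧ s.1 ≤ s.2 ∧ (s.2 : ℝ) ^ α < |x s.1 s.2|}.Finite) :
    ∃ N : ℕ, ∀ n ≥ N, ∀ i j : ℕ, 1 ≤ i → i ≤ j → j ≤ n → |x i j| ≤ (n : ℝ) ^ α := by
  have hlarge : ∀ᶠ n : ℕ in atTop, ∀ s ∈ hfin.toFinset, |x s.1 s.2| ≤ (n : ℝ) ^ α :=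
    hfin.toFinset.eventually_all.mpr fun s _ ↦
      ((tendsto_rpow_atTop hα).comp tendsto_natCast_atTop_atTop).eventually_ge_atTop _
  obtain ⟨N, hN⟩ := hlarge.exists_forall_of_atTop
  refine ⟨N, fun n hn i j hi hij hjn ↦ ?_⟩
  by_cases hexc : (j : ℝ) ^ α < |x i j|
  · exact hN n hn (i, j) (hfin.mem_toFinset.mpr ⟨hi, hij, hexc⟩)
  · calc |x i j| ≤ (j : ℝ) ^ α := not_lt.mp hexc
      _ ≤ (n : ℝ) ^ α := rpow_le_rpow j.cast_nonneg (by exact_mod_cast hjn) hα.le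

theorem ae_eventually_abs_le_rpow_of_integral_rpow_le {a : ℕ → ℕ → Ω → ℝ} {α p M : ℝ}
    (hp : 0 < p) (hαp : 2 < α * p) (hint : ∀ i j, i ≤ j → Integrable (fun ω ↦ |a i j ω| ^ p) μ)
    (hM : ∀ i j, i ≤ j → ∫ ω, |a i j ω| ^ p ∂μ ≤ M) :
    ∀ᵐ ω ∂μ, ∃ N : ℕ, ∀ n ≥ N, ∀ i j : ℕ, 1 ≤ i → i ≤ j → j ≤ n →
      |a i j ω| ≤ (n : ℝ) ^ α := by
  have hα : 0 < α := pos_of_mul_pos_left (by linarith) hp.le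
  set f : ℕ × ℕ → ℝ := fun s ↦ if 1 ≤ s.1 ∧ s.1 ≤ s.2 then (s.2 : ℝ) ^ (-(α * p)) else 0
  have htail : ∀ s : ℕ × ℕ,
      μ {ω | 1 ≤ s.1 ∧ s.1 ≤ s.2 ∧ (s.2 : ℝ) ^ α < |a s.1 s.2 ω|} ≤ ENNReal.ofReal (M * f s) := by
    rintro ⟨i, j⟩
    by_cases hij : 1 ≤ i ∧ i ≤ j
    · have hj0 : (0 : ℝ) < j := by exact_mod_cast hij.1.trans hij.2
      calc μ {ω | 1 ≤ i ∧ i ≤ j ∧ (j : ℝ) ^ α < |a i j ω|}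
          ≤ μ {ω | (j : ℝ) ^ α < |a i j ω|} := measure_mono fun ω hω ↦ hω.2.2
        _ ≤ ENNReal.ofReal ((∫ ω, |a i j ω| ^ p ∂μ) / ((j : ℝ) ^ α) ^ p) :=
          measure_lt_abs_le_integral_rpow_div hp.le (rpow_pos_of_pos hj0 α) (hint i j hij.2)
        _ ≤ ENNReal.ofReal (M * f (i, j)) := by
          refine ENNReal.ofReal_le_ofReal ?_
          rw [← rpow_mul hj0.le, div_eq_mul_inv, ← rpow_neg hj0.le]
          simp only [f, if_pos hij]
          gcongr
          exact hM i j hij.2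
    · have hempty : {ω | 1 ≤ i ∧ i ≤ j ∧ (j : ℝ) ^ α < |a i j ω|} = ∅ :=
        Set.eq_empty_of_forall_notMem fun ω hω ↦ hij ⟨hω.1, hω.2.1⟩
      simp only [hempty, measure_empty, zero_le]
  have hsum : ∑' s : ℕ × ℕ,
      μ {ω | 1 ≤ s.1 ∧ s.1 ≤ s.2 ∧ (s.2 : ℝ) ^ α < |a s.1 s.2 ω|} ≠ ⊤ := by
    have hM0 : 0 ≤ M :=
      (integral_nonneg fun ω ↦ rpow_nonneg (abs_nonneg _) p).trans (hM 0 0 le_rfl)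
    have hf0 : ∀ s, 0 ≤ M * f s := fun s ↦ mul_nonneg hM0 (by positivity)
    refine ne_top_of_le_ne_top ENNReal.ofReal_ne_top
      ((ENNReal.tsum_le_tsum htail).trans_eq (ENNReal.ofReal_tsum_of_nonneg hf0 ?_).symm)
    exact (summable_triangle_rpow_neg hαp).mul_left M
  filter_upwards [ae_finite_setOfPred_mem hsum] with ω hω
  exact exists_forall_abs_le_rpow_of_finite hα hω

end

lemma two_lt_mul_of_le_div {η δ₀ δ : ℝ} (hη : 1 ≤ η) (hδ₀1 : δ₀ < 1) (hδ : 0 < δ)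
    (hδle : δ ≤ δ₀ / (η * (η + 1))) : 2 < (1 / η - δ) * (2 * (η + δ₀)) := by
  have hη0 : 0 < η := by linarith
  have hδle' : δ * (η * (η + 1)) ≤ δ₀ := (le_div_iff₀ (by positivity)).mp hδle
  have hδη : 0 < δ * η := mul_pos hδ hη0
  rw [sub_mul, div_mul_eq_mul_div, one_mul, lt_sub_iff_add_lt, lt_div_iff₀ hη0]
  nlinarith

theorem ae_eventually_entries_small_general
    {Ω : Type*} [MeasurableSpace Ω] (P : Measure Ω) [IsProbabilityMeasure P]
    (a : ℕ → ℕ → Ω → ℝ)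
    (ha_ident : ∀ i j k l, i ≤ j → k ≤ l → IdentDistrib (a i j) (a k l) P P)
    (η δ₀ : ℝ) (hη : 1 ≤ η) (hδ₀ : 0 < δ₀) (hδ₀1 : δ₀ < 1)
    (ha_mom : Integrable (fun ω => |a 0 0 ω| ^ (2 * (η + δ₀))) P) :
    ∀ δ : ℝ, 0 < δ → δ ≤ δ₀ / (η * (η + 1)) →
      ∀ᵐ ω ∂P, ∃ N : ℕ, ∀ n ≥ N, ∀ i j : ℕ, 1 ≤ i → i ≤ j → j ≤ n →
        |a i j ω| ≤ (n : ℝ) ^ ((1 : ℝ) / η - δ) := by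
  intro δ hδ hδle
  have hp : 0 < 2 * (η + δ₀) := by linarith
  have hmoment : ∀ i j, i ≤ j → IdentDistrib (fun ω ↦ |a i j ω| ^ (2 * (η + δ₀)))
      (fun ω ↦ |a 0 0 ω| ^ (2 * (η + δ₀))) P P := fun i j hij ↦
    (ha_ident i j 0 0 hij le_rfl).comp
      ((continuous_rpow_const hp.le).comp continuous_abs).measurable
  exact ae_eventually_abs_le_rpow_of_integral_rpow_le hp
    (two_lt_mul_of_le_div hη hδ₀1 hδ hδle)
    (fun i j hij ↦ (hmoment i j hij).integrable_iff.mpr ha_mom)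
    (fun i j hij ↦ (hmoment i j hij).integral_eq.le)

/-- Let `{a_{ij} : i ≤ j}` be jointly independent identically distributed
random variables with `E|a_{ij}|^{2(η+δ₀)} < ∞`, where `η ≥ 1` and `0 < δ₀ < 1`.  Then for
every `0 < δ ≤ δ₀/(η(η+1))`, almost surely there is `N` such that for all `n ≥ N` and all
`1 ≤ i ≤ j ≤ n` one has `|a_{ij}| ≤ n^{1/η−δ}`. -/
theorem ae_eventually_entries_small
    {Ω : Type*} [MeasurableSpace Ω] (P : Measure Ω) [IsProbabilityMeasure P]
    (a : ℕ → ℕ → Ω → ℝ)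
    (ha_meas : ∀ i j, Measurable (a i j))
    (ha_indep : iIndepFun
      (fun p : {p : ℕ × ℕ // p.1 ≤ p.2} => a p.1.1 p.1.2) P)
    (ha_ident : ∀ i j k l, i ≤ j → k ≤ l → IdentDistrib (a i j) (a k l) P P)
    (η δ₀ : ℝ) (hη : 1 ≤ η) (hδ₀ : 0 < δ₀) (hδ₀1 : δ₀ < 1)
    (ha_mom : Integrable (fun ω => |a 0 0 ω| ^ (2 * (η + δ₀))) P) :
    ∀ δ : ℝ, 0 < δ → δ ≤ δ₀ / (η * (η + 1)) →
      ∀ᵐ ω ∂P, ∃ N : ℕ, ∀ n ≥ N, ∀ i j : ℕ, 1 ≤ i → i ≤ j → j ≤ n →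
        |a i j ω| ≤ (n : ℝ) ^ ((1 : ℝ) / η - δ) :=
  ae_eventually_entries_small_general P a ha_ident η δ₀ hη hδ₀ hδ₀1 ha_mom
end
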